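/- Fix θ₃ ∈ (0, π/2) and let s := π − θ₃. For θ₁ in the open interval where both θ₁ ∈ (0, π/2) and s − θ₁ ∈ (0, π/2), the function θ₁ ↦ (t(θ₁) − a(θ₁)) + (t(s − θ₁) − a(s − θ₁)) attains its maximum only at θ₁ = s/2, i.e., only when θ₁ = θ₂ where θ₂ = π − θ₁ − θ₃. -/

import Mathlib

open Real

/-- `t θ = tan θ`. -/
noncomputable def tFun (θ : ℝ) : ℝ := tan θ

/-- `a θ = (π/2 − θ)·tan²θ`. -/
noncomputable def aFun (θ : ℝ) : ℝ := (π / 2 - θ) * tan θ ^ 2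

/-!
The objective is `g θ₁ + g (s − θ₁)` with `g = t − a`, and the two arguments average to `s / 2`,
so it suffices that `g` is strictly concave on `(0, π/2)`. Writing `T = tan θ`,
`g'' θ = (1 + T²) (6 T − (π − 2θ) (1 + 3 T²))`, and after multiplying by `cos² θ` and putting
`v = π − 2θ` the sign condition becomes the Cusa–Huygens inequality `3 sin v < v (2 + cos v)`
on `(0, π)`. That one follows by differentiating three times: the third derivative is `v sin v`.
-/

namespace UncoveredTwoAngle

open Set

theorem pos_of_hasDerivAt_pos_of_eq_zero {f f' : ℝ → ℝ} {a b : ℝ}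
    (hf : ∀ x, HasDerivAt f (f' x) x) (ha : f a = 0) (hf' : ∀ x ∈ Ioo a b, 0 < f' x) :
    ∀ x ∈ Ioo a b, 0 < f x := by
  intro x hx
  have hmono : StrictMonoOn f (Icc a b) :=
    strictMonoOn_of_hasDerivWithinAt_pos (convex_Icc a b)
      (fun y _ => (hf y).continuousAt.continuousWithinAt)
      (fun y _ => (hf y).hasDerivWithinAt) (by rwa [interior_Icc])
  simpa [ha] using hmono ⟨le_rfl, (hx.1.trans hx.2).le⟩ ⟨hx.1.le, hx.2.le⟩ hx.1

theorem strictConcaveOn_of_hasDerivWithinAt2_neg {D : Set ℝ} (hD : Convex ℝ D)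
    {f f' f'' : ℝ → ℝ} (hf : ContinuousOn f D)
    (hf' : ∀ x ∈ interior D, HasDerivWithinAt f (f' x) (interior D) x)
    (hf'' : ∀ x ∈ interior D, HasDerivWithinAt f' (f'' x) (interior D) x)
    (hf''₀ : ∀ x ∈ interior D, f'' x < 0) : StrictConcaveOn ℝ D f := by
  have hanti : StrictAntiOn f' (interior D) :=
    strictAntiOn_of_hasDerivWithinAt_neg hD.interior
      (fun x hx => (hf'' x hx).continuousWithinAt)
      (by rwa [interior_interior]) (by rwa [interior_interior])
  refine StrictAntiOn.strictConcaveOn_of_deriv hD hf fun x hx y hy hxy => ?_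
  rw [deriv_eqOn isOpen_interior hf' hx, deriv_eqOn isOpen_interior hf' hy]
  exact hanti hx hy hxy

theorem hasDerivAt_tan_one_add_tan_sq {x : ℝ} (hx : cos x ≠ 0) :
    HasDerivAt tan (1 + tan x ^ 2) x := by
  simpa [← inv_one_add_tan_sq hx] using hasDerivAt_tan hx

theorem mul_cos_lt_sin {v : ℝ} (hv : v ∈ Ioo 0 π) : v * cos v < sin v := by
  have hd : ∀ x, HasDerivAt (fun v => sin v - v * cos v) (x * sin x) x := fun x =>
    ((hasDerivAt_sin x).sub ((hasDerivAt_id' x).mul (hasDerivAt_cos x))).congr_deriv (by ring)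
  have hpos := pos_of_hasDerivAt_pos_of_eq_zero hd (by simp)
    (fun x hx => mul_pos hx.1 (sin_pos_of_pos_of_lt_pi hx.1 hx.2)) v hv
  linarith

theorem two_mul_cos_add_mul_sin_lt_two {v : ℝ} (hv : v ∈ Ioo 0 π) :
    2 * cos v + v * sin v < 2 := by
  have hd : ∀ x, HasDerivAt (fun v => 2 - 2 * cos v - v * sin v) (sin x - x * cos x) x :=
    fun x => ((((hasDerivAt_cos x).const_mul 2).const_sub 2).sub
      ((hasDerivAt_id' x).mul (hasDerivAt_sin x))).congr_deriv (by ring)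
  have hpos := pos_of_hasDerivAt_pos_of_eq_zero hd (by simp)
    (fun x hx => sub_pos.2 (mul_cos_lt_sin hx)) v hv
  linarith

theorem three_mul_sin_lt_mul_two_add_cos {v : ℝ} (hv : v ∈ Ioo 0 π) :
    3 * sin v < v * (2 + cos v) := by
  have hd : ∀ x, HasDerivAt (fun v => v * (2 + cos v) - 3 * sin v)
      (2 - 2 * cos x - x * sin x) x := fun x =>
    (((hasDerivAt_id' x).mul ((hasDerivAt_cos x).const_add 2)).sub
      ((hasDerivAt_sin x).const_mul 3)).congr_deriv (by ring)
  have hpos := pos_of_hasDerivAt_pos_of_eq_zero hd (by simp)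
    (fun x hx => by linarith [two_mul_cos_add_mul_sin_lt_two hx]) v hv
  linarith

noncomputable def uncovered (θ : ℝ) : ℝ := tFun θ - aFun θ

noncomputable def uncoveredDeriv (θ : ℝ) : ℝ :=
  1 + 2 * tan θ ^ 2 - (π - 2 * θ) * tan θ * (1 + tan θ ^ 2)

theorem hasDerivAt_uncovered {θ : ℝ} (hθ : cos θ ≠ 0) :
    HasDerivAt uncovered (uncoveredDeriv θ) θ := by
  have ht := hasDerivAt_tan_one_add_tan_sq hθ
  exact (ht.sub (((hasDerivAt_id' θ).const_sub (π / 2)).mul (ht.pow 2))).congr_deriv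
    (by simp only [uncoveredDeriv, Pi.pow_apply]; ring)

theorem hasDerivAt_uncoveredDeriv {θ : ℝ} (hθ : cos θ ≠ 0) :
    HasDerivAt uncoveredDeriv
      ((1 + tan θ ^ 2) * (6 * tan θ - (π - 2 * θ) * (1 + 3 * tan θ ^ 2))) θ := by
  have ht := hasDerivAt_tan_one_add_tan_sq hθ
  exact ((((ht.pow 2).const_mul 2).const_add 1).sub
    ((((hasDerivAt_id' θ).const_mul 2).const_sub π).mul ht |>.mul ((ht.pow 2).const_add 1)))
    |>.congr_deriv (by simp only [Pi.pow_apply, Pi.mul_apply]; ring)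

theorem six_mul_tan_lt {θ : ℝ} (hθ : θ ∈ Ioo 0 (π / 2)) :
    6 * tan θ < (π - 2 * θ) * (1 + 3 * tan θ ^ 2) := by
  have hc : 0 < cos θ := cos_pos_of_mem_Ioo ⟨by linarith [hθ.1, pi_pos], hθ.2⟩
  have hcusa := three_mul_sin_lt_mul_two_add_cos (v := π - 2 * θ)
    ⟨by linarith [hθ.2], by linarith [hθ.1]⟩
  rw [sin_pi_sub, cos_pi_sub, sin_two_mul, cos_two_mul] at hcusa
  rw [tan_eq_sin_div_cos, div_pow, ← sub_pos]
  have hquot : (π - 2 * θ) * (1 + 3 * (sin θ ^ 2 / cos θ ^ 2)) - 6 * (sin θ / cos θ) =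
      ((π - 2 * θ) * (2 + -(2 * cos θ ^ 2 - 1)) - 3 * (2 * sin θ * cos θ)) / cos θ ^ 2 := by
    field_simp
    linear_combination (3 * π - 6 * θ) * sin_sq_add_cos_sq θ
  rw [hquot]
  exact div_pos (by linarith) (by positivity)

theorem strictConcaveOn_uncovered : StrictConcaveOn ℝ (Ioo 0 (π / 2)) uncovered := by
  have hcos : ∀ x ∈ Ioo 0 (π / 2), cos x ≠ 0 := fun x hx =>
    (cos_pos_of_mem_Ioo ⟨by linarith [hx.1, pi_pos], hx.2⟩).ne'
  refine strictConcaveOn_of_hasDerivWithinAt2_neg (convex_Ioo _ _) (f' := uncoveredDeriv)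
    (f'' := fun θ => (1 + tan θ ^ 2) * (6 * tan θ - (π - 2 * θ) * (1 + 3 * tan θ ^ 2)))
    (fun x hx => (hasDerivAt_uncovered (hcos x hx)).continuousAt.continuousWithinAt)
    ?_ ?_ ?_ <;> rw [interior_Ioo]
  · exact fun x hx => (hasDerivAt_uncovered (hcos x hx)).hasDerivWithinAt
  · exact fun x hx => (hasDerivAt_uncoveredDeriv (hcos x hx)).hasDerivWithinAt
  · exact fun x hx => mul_neg_of_pos_of_neg (by positivity) (by linarith [six_mul_tan_lt hx])

end UncoveredTwoAngle

theorem uncovered_two_angle_max_general (s : ℝ) (θ₁ : ℝ) (h₁ : θ₁ ∈ Set.Ioo 0 (π / 2))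
    (h₂ : s - θ₁ ∈ Set.Ioo 0 (π / 2)) (hne : θ₁ ≠ s / 2) :
    (tFun θ₁ - aFun θ₁) + (tFun (s - θ₁) - aFun (s - θ₁)) <
      (tFun (s / 2) - aFun (s / 2)) + (tFun (s - s / 2) - aFun (s - s / 2)) := by
  have hsym : θ₁ ≠ s - θ₁ := fun h => hne (by linarith)
  have hmid := UncoveredTwoAngle.strictConcaveOn_uncovered.2 h₁ h₂ hsym
    one_half_pos one_half_pos (add_halves 1)
  simp only [smul_eq_mul, UncoveredTwoAngle.uncovered] at hmid
  rw [show 1 / 2 * θ₁ + 1 / 2 * (s - θ₁) = s / 2 by ring] at hmid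
  rw [sub_half]
  linarith

/-- With `θ₃ ∈ (0, π/2)` fixed and `s = π − θ₃`, on the set of `θ₁` with
`θ₁ ∈ (0, π/2)` and `s − θ₁ ∈ (0, π/2)`, the uncovered-area function
`θ₁ ↦ (t θ₁ − a θ₁) + (t (s − θ₁) − a (s − θ₁))` attains its maximum only at `θ₁ = s/2`. -/
theorem uncovered_two_angle_max (θ₃ : ℝ) (hθ₃ : θ₃ ∈ Set.Ioo 0 (π / 2)) (s : ℝ)
    (hs : s = π - θ₃) (θ₁ : ℝ) (h₁ : θ₁ ∈ Set.Ioo 0 (π / 2))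
    (h₂ : s - θ₁ ∈ Set.Ioo 0 (π / 2)) (hne : θ₁ ≠ s / 2) :
    (tFun θ₁ - aFun θ₁) + (tFun (s - θ₁) - aFun (s - θ₁)) <
      (tFun (s / 2) - aFun (s / 2)) + (tFun (s - s / 2) - aFun (s - s / 2)) :=
  uncovered_two_angle_max_general s θ₁ h₁ h₂ hne
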